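/- Let p be prime and let L be a finite-dimensional vector space over 𝔽_p equipped with a symplectic self-duality ∇ (an isomorphism L → Hom(L, ℚ/ℤ) with ∇(x)(x)=0 for all x). Then (L, ∇) is standard: there is a finite abelian group A and an isomorphism φ : A × dual(A) → L carrying the standard symplectic self-duality ∇⁰(x,χ)(y,λ) = χ(y) − λ(x) to ∇. -/

import Mathlib

/-!
Since `L` has exponent `p`, `∇` takes values in the `p`-torsion `(1/p)ℤ/ℤ ≅ 𝔽_p` of `ℚ/ℤ`, so it
comes from an alternating nondegenerate `𝔽_p`-bilinear form `B`. Splitting off hyperbolic planes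
`⟨x, y⟩` with `B x y = 1` one at a time writes `L = A ⊕ M` with `A` and `M` isotropic. For any such
splitting, `m ↦ ∇ m |_A` identifies `M` with `dual A`, and under `L ≅ A × dual A` the pairing
`∇ (a + m) (b + n) = ∇ m b - ∇ n a` becomes the standard one.
-/


/-- ℚ/ℤ, the dualizing object for finite abelian groups. -/
abbrev QZ : Type := AddCircle (1 : ℚ)

/-- `(L, ∇)` is isomorphic, as a group with symplectic self-duality, to
`A × dual A` with the standard symplectic self-duality
`∇⁰(x,χ)(y,λ) = χ(y) − λ(x)`. -/
def StandardPair (A L : Type) [AddCommGroup A] [AddCommGroup L]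
    (nabla : L ≃+ (L →+ QZ)) : Prop :=
  ∃ φ : (A × (A →+ QZ)) ≃+ L,
    ∀ a b : A × (A →+ QZ), nabla (φ a) (φ b) = a.2 b.1 - b.2 a.1


namespace ZMod

variable (p : ℕ) [NeZero p]

noncomputable def toQZ : ZMod p →+ QZ :=
  ZMod.lift p ⟨zmultiplesHom QZ (((p : ℚ)⁻¹ : ℚ) : QZ), by
    rw [zmultiplesHom_apply, ← AddCircle.coe_zsmul, AddCircle.coe_eq_zero_iff]
    exact ⟨1, by simp [NeZero.ne p]⟩⟩

lemma toQZ_intCast (k : ℤ) : toQZ p k = ((k / p : ℚ) : QZ) := by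
  rw [toQZ, lift_coe, zmultiplesHom_apply, ← AddCircle.coe_zsmul, zsmul_eq_mul, div_eq_mul_inv]

lemma toQZ_injective : Function.Injective (toQZ p) := by
  rw [injective_iff_map_eq_zero]
  intro a ha
  obtain ⟨k, rfl⟩ := ZMod.intCast_surjective a
  rw [toQZ_intCast, AddCircle.coe_eq_zero_iff] at ha
  obtain ⟨n, hn⟩ := ha
  have hk : k = n * p := by
    rw [zsmul_one, eq_div_iff (by simp [NeZero.ne p])] at hn
    exact_mod_cast hn.symm
  rw [hk, ZMod.intCast_zmod_eq_zero_iff_dvd]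
  exact dvd_mul_left _ _

lemma exists_toQZ_eq_of_nsmul_eq_zero {z : QZ} (hz : p • z = 0) : ∃ a, toQZ p a = z := by
  induction z using QuotientAddGroup.induction_on with
  | H q =>
    rw [← AddCircle.coe_nsmul, AddCircle.coe_eq_zero_iff] at hz
    obtain ⟨n, hn⟩ := hz
    refine ⟨n, ?_⟩
    rw [toQZ_intCast, ← zsmul_one, hn, nsmul_eq_mul,
      mul_div_cancel_left₀ _ (by simp [NeZero.ne p])]

variable {L : Type*} [AddCommGroup L] [Module (ZMod p) L]

lemma toQZ_comp_bijective :
    Function.Bijective (AddMonoidHom.compHom (toQZ p) : (L →+ ZMod p) → (L →+ QZ)) := by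
  refine ⟨fun g g' h ↦ AddMonoidHom.ext fun x ↦ toQZ_injective p (DFunLike.congr_fun h x),
    fun f ↦ ?_⟩
  have hf : ∀ x, f x ∈ (toQZ p).range := fun x ↦ by
    refine exists_toQZ_eq_of_nsmul_eq_zero p ?_
    rw [← map_nsmul, ← Nat.cast_smul_eq_nsmul (ZMod p), natCast_self, zero_smul, map_zero]
  exact ⟨((AddMonoidHom.ofInjective (toQZ_injective p)).symm : _ →+ ZMod p).comp
    (f.codRestrict _ hf), AddMonoidHom.ext fun x ↦
      AddMonoidHom.apply_ofInjective_symm (toQZ_injective p) ⟨f x, hf x⟩⟩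

lemma exists_bilinForm_toQZ_eq (f : L →+ L →+ QZ) :
    ∃ B : LinearMap.BilinForm (ZMod p) L, ∀ x y, toQZ p (B x y) = f x y := by
  let T := AddEquiv.ofBijective _ (toQZ_comp_bijective p (L := L))
  refine ⟨((AddMonoidHom.toZModLinearMapEquiv p).toAddMonoidHom.comp
    (T.symm.toAddMonoidHom.comp f)).toZModLinearMap p, fun x y ↦ ?_⟩
  exact DFunLike.congr_fun (T.apply_symm_apply (f x)) y

end ZMod

lemma AddMonoidHom.neg_apply_swap {L Q : Type*} [AddCommGroup L] [AddCommGroup Q]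
    (f : L →+ L →+ Q) (hf : ∀ x, f x x = 0) (x y : L) : -f x y = f y x := by
  have h := hf (x + y)
  simp only [map_add, AddMonoidHom.add_apply, hf, zero_add, add_zero] at h
  exact neg_eq_of_add_eq_zero_left h

section Lagrangian

variable {R : Type*} {L : Type} [Ring R] [AddCommGroup L] [Module R L] (nabla : L ≃+ (L →+ QZ))
  {A M : Submodule R L}

def restrictDual (A M : Submodule R L) : M →+ (A →+ QZ) :=
  (AddMonoidHom.compHom' A.subtype.toAddMonoidHom).comp
    ((nabla : L →+ L →+ QZ).comp M.subtype.toAddMonoidHom)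

lemma restrictDual_apply (m : M) (a : A) : restrictDual nabla A M m a = nabla m a := rfl

lemma restrictDual_bijective (h : IsCompl A M) (hA : ∀ a ∈ A, ∀ b ∈ A, nabla a b = 0)
    (hM : ∀ m ∈ M, ∀ n ∈ M, nabla m n = 0) : Function.Bijective (restrictDual nabla A M) := by
  constructor
  · rw [injective_iff_map_eq_zero]
    intro m hm
    have : nabla m = 0 := AddMonoidHom.ext fun l ↦ by
      rw [← A.projection_add_projection_eq_self h l, map_add, AddMonoidHom.zero_apply,
        hM m m.2 _ (M.projection_apply_mem h.symm l), add_zero]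
      exact DFunLike.congr_fun hm (A.projectionOnto M h l)
    simpa using this
  · intro χ
    let l := nabla.symm (χ.comp (A.projectionOnto M h).toAddMonoidHom)
    refine ⟨M.projectionOnto A h.symm l, AddMonoidHom.ext fun a ↦ ?_⟩
    have hl : nabla l a = χ a := by
      simp [l, A.projectionOnto_apply_left h a]
    rw [restrictDual_apply, Submodule.coe_projectionOnto_apply,
      Submodule.projection_eq_self_sub_projection h, map_sub, AddMonoidHom.sub_apply, hl,
      hA _ (A.projection_apply_mem h l) a a.2, sub_zero]

theorem standardPair_of_isCompl (hsymp : ∀ x, nabla x x = 0) (h : IsCompl A M)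
    (hA : ∀ a ∈ A, ∀ b ∈ A, nabla a b = 0) (hM : ∀ m ∈ M, ∀ n ∈ M, nabla m n = 0) :
    StandardPair A L nabla := by
  let ψ := AddEquiv.ofBijective _ (restrictDual_bijective nabla h hA hM)
  have hψ (χ : A →+ QZ) (c : A) : nabla (ψ.symm χ) c = χ c :=
    DFunLike.congr_fun (ψ.apply_symm_apply χ) c
  refine ⟨((AddEquiv.refl A).prodCongr ψ.symm).trans (A.prodEquivOfIsCompl M h).toAddEquiv, ?_⟩
  rintro ⟨a, χ⟩ ⟨b, μ⟩
  have hskew : nabla a (ψ.symm μ) = -μ a := by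
    rw [← hψ μ a]
    exact ((nabla : L →+ L →+ QZ).neg_apply_swap hsymp _ _).symm
  change nabla (a + ψ.symm χ) (b + ψ.symm μ) = χ b - μ a
  simp only [map_add, AddMonoidHom.add_apply]
  rw [hA a a.2 b b.2, hM _ (ψ.symm χ).2 _ (ψ.symm μ).2, hψ, hskew]
  abel

end Lagrangian

namespace LinearMap.BilinForm

open Submodule

variable {K V : Type*} [Field K] [AddCommGroup V] [Module K V] {B : LinearMap.BilinForm K V}

lemma span_singleton_sup_le_orthogonal (hB : B.IsAlt) {x : V} {A : Submodule K V}
    (hA : A ≤ B.orthogonal A) (hxA : A ≤ ker (B x)) :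
    K ∙ x ⊔ A ≤ B.orthogonal (K ∙ x ⊔ A) := by
  intro v hv
  rw [mem_orthogonal_iff]
  intro u hu
  obtain ⟨_, hc, a, ha, rfl⟩ := mem_sup.1 hv
  obtain ⟨_, hd, b, hb, rfl⟩ := mem_sup.1 hu
  obtain ⟨c, rfl⟩ := mem_span_singleton.1 hc
  obtain ⟨d, rfl⟩ := mem_span_singleton.1 hd
  have hxa : B x a = 0 := hxA ha
  have hbx : B b x = 0 := by rw [← hB.neg_eq, hxA hb, neg_zero]
  simp [hB.self_eq_zero x, hxa, hbx, hA ha b hb]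

section HyperbolicPair

variable (hB : B.IsAlt) {x y : V} (hxy : B x y = 1)
include hB hxy

lemma add_smul_sub_smul_mem_ker_inf_ker (w : V) :
    w + B y w • x - B x w • y ∈ ker (B x) ⊓ ker (B y) := by
  have hyx : B y x = -1 := by rw [← hB.neg_eq, hxy]
  simp [hB.self_eq_zero x, hB.self_eq_zero y, hxy, hyx]

lemma disjoint_span_singleton_sup {A M : Submodule K V} (hA : A ≤ ker (B x) ⊓ ker (B y))
    (hM : M ≤ ker (B x) ⊓ ker (B y)) (hAM : Disjoint A M) :
    Disjoint (K ∙ x ⊔ A) (K ∙ y ⊔ M) := by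
  have hyx : B y x = -1 := by rw [← hB.neg_eq, hxy]
  rw [disjoint_def]
  intro v hvA hvM
  obtain ⟨_, hc, a, ha, rfl⟩ := mem_sup.1 hvA
  obtain ⟨_, hd, m, hm, hv⟩ := mem_sup.1 hvM
  obtain ⟨c, rfl⟩ := mem_span_singleton.1 hc
  obtain ⟨d, rfl⟩ := mem_span_singleton.1 hd
  obtain ⟨hxa, hya⟩ := mem_inf.1 (hA ha)
  obtain ⟨hxm, hym⟩ := mem_inf.1 (hM hm)
  have hd : d = 0 := by
    simpa [hB.self_eq_zero x, hxy, mem_ker.1 hxa, mem_ker.1 hxm] using congrArg (B x) hv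
  have hc : c = 0 := by
    simpa [hB.self_eq_zero y, hyx, mem_ker.1 hya, mem_ker.1 hym, hd] using congrArg (B y) hv
  subst hc hd
  simp only [zero_smul, zero_add] at hv ⊢
  exact disjoint_def.1 hAM a ha (hv ▸ hm)

variable {W : Submodule K V} (hx : x ∈ W) (hy : y ∈ W)
include hx hy

lemma span_singleton_sup_sup_eq {A M : Submodule K V}
    (hAM : A ⊔ M = W ⊓ (ker (B x) ⊓ ker (B y))) : K ∙ x ⊔ A ⊔ (K ∙ y ⊔ M) = W := by
  rw [sup_sup_sup_comm, hAM]
  refine le_antisymm (sup_le (sup_le ?_ ?_) inf_le_left) fun w hw ↦ ?_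
  · exact (span_singleton_le_iff_mem x W).2 hx
  · exact (span_singleton_le_iff_mem y W).2 hy
  have hw' : w + B y w • x - B x w • y ∈ W ⊓ (ker (B x) ⊓ ker (B y)) :=
    mem_inf.2 ⟨W.sub_mem (W.add_mem hw (W.smul_mem _ hx)) (W.smul_mem _ hy),
      add_smul_sub_smul_mem_ker_inf_ker hB hxy w⟩
  have : w = -B y w • x + B x w • y + (w + B y w • x - B x w • y) := by
    rw [neg_smul]; abel
  rw [this]
  exact add_mem (add_mem (mem_sup_left (mem_sup_left (smul_mem _ _ (mem_span_singleton_self x))))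
    (mem_sup_left (mem_sup_right (smul_mem _ _ (mem_span_singleton_self y))))) (mem_sup_right hw')

lemma disjoint_inf_ker_inf_ker_orthogonal (hW : Disjoint W (B.orthogonal W)) :
    Disjoint (W ⊓ (ker (B x) ⊓ ker (B y))) (B.orthogonal (W ⊓ (ker (B x) ⊓ ker (B y)))) := by
  rw [disjoint_def]
  intro w hw hw'
  obtain ⟨hwW, hxw, hyw⟩ := hw
  refine disjoint_def.1 hW w hwW fun u hu ↦ ?_
  have hu' := mem_inf.2 ⟨W.sub_mem (W.add_mem hu (W.smul_mem _ hx)) (W.smul_mem _ hy),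
      add_smul_sub_smul_mem_ker_inf_ker hB hxy u⟩
  have := hw' _ hu'
  simp only [map_sub, map_add, map_smul, LinearMap.sub_apply, LinearMap.add_apply,
    LinearMap.smul_apply, smul_eq_mul, mem_ker.1 hxw, mem_ker.1 hyw] at this
  simpa using this

end HyperbolicPair

lemma exists_mem_apply_eq_one (hB : B.IsAlt) {W : Submodule K V}
    (hW : Disjoint W (B.orthogonal W)) (hW0 : W ≠ ⊥) : ∃ x ∈ W, ∃ y ∈ W, B x y = 1 := by
  obtain ⟨x, hx, hx0⟩ := exists_mem_ne_zero_of_ne_bot hW0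
  have hxW : x ∉ B.orthogonal W := fun h ↦ hx0 (disjoint_def.1 hW x hx h)
  simp only [mem_orthogonal_iff, not_forall] at hxW
  obtain ⟨y, hy, hyx⟩ := hxW
  have hxy : B x y ≠ 0 := by rwa [← hB.neg_eq, neg_ne_zero]
  exact ⟨x, hx, (B x y)⁻¹ • y, W.smul_mem _ hy, by simp [hxy]⟩

theorem exists_isotropic_sup_eq [FiniteDimensional K V] (hB : B.IsAlt) (W : Submodule K V)
    (hW : Disjoint W (B.orthogonal W)) :
    ∃ A M : Submodule K V, A ≤ B.orthogonal A ∧ M ≤ B.orthogonal M ∧ Disjoint A M ∧ A ⊔ M = W := by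
  induction hd : Module.finrank K W using Nat.strong_induction_on generalizing W with
  | _ d ih =>
    rcases eq_or_ne W ⊥ with rfl | hW0
    · exact ⟨⊥, ⊥, bot_le, bot_le, disjoint_bot_left, bot_sup_eq ⊥⟩
    obtain ⟨x, hx, y, hy, hxy⟩ := exists_mem_apply_eq_one hB hW hW0
    have hlt : W ⊓ (ker (B x) ⊓ ker (B y)) < W := by
      refine SetLike.lt_iff_le_and_exists.2 ⟨inf_le_left, x, hx, fun h ↦ ?_⟩
      have hyx : B y x = 0 := mem_ker.1 (mem_inf.1 (mem_inf.1 h).2).2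
      rw [← hB.neg_eq, hxy] at hyx
      exact one_ne_zero (neg_eq_zero.1 hyx)
    obtain ⟨A, M, hA, hM, hAM, hsup⟩ := ih _ (hd ▸ finrank_lt_finrank_of_lt hlt) _
      (disjoint_inf_ker_inf_ker_orthogonal hB hxy hx hy hW) rfl
    have hA' : A ≤ ker (B x) ⊓ ker (B y) := le_sup_left.trans (hsup.le.trans inf_le_right)
    have hM' : M ≤ ker (B x) ⊓ ker (B y) := le_sup_right.trans (hsup.le.trans inf_le_right)
    exact ⟨K ∙ x ⊔ A, K ∙ y ⊔ M, span_singleton_sup_le_orthogonal hB hA (hA'.trans inf_le_left),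
      span_singleton_sup_le_orthogonal hB hM (hM'.trans inf_le_right),
      disjoint_span_singleton_sup hB hxy hA' hM' hAM, span_singleton_sup_sup_eq hB hxy hx hy hsup⟩

theorem exists_isCompl_isotropic [FiniteDimensional K V] (hB : B.IsAlt) (hB' : B.SeparatingLeft) :
    ∃ A M : Submodule K V, IsCompl A M ∧ A ≤ B.orthogonal A ∧ M ≤ B.orthogonal M := by
  have htop : B.orthogonal ⊤ = ⊥ :=
    orthogonal_top_eq_bot (hB.isRefl.nondegenerate_iff_separatingLeft.2 hB')
  obtain ⟨A, M, hA, hM, hAM, hsup⟩ := exists_isotropic_sup_eq hB ⊤ (htop ▸ disjoint_bot_right)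
  exact ⟨A, M, ⟨hAM, codisjoint_iff.2 hsup⟩, hA, hM⟩

end LinearMap.BilinForm

/-- Every symplectic self-duality of a finite-dimensional 𝔽_p-vector space (i.e. a
finite abelian group of exponent `p`) is standard. -/
theorem statement6 (p : ℕ) (hp : p.Prime) (L : Type) [AddCommGroup L] [Fintype L]
    (hexp : ∀ x : L, p • x = 0)
    (nabla : L ≃+ (L →+ QZ)) (hsymp : ∀ x : L, nabla x x = 0) :
    ∃ (A : Type) (iA : AddCommGroup A) (_ : @Finite A),
      @StandardPair A L iA _ nabla := by
  have : Fact p.Prime := ⟨hp⟩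
  -- kept opaque: with `let`, instance problems over this module structure get stuck
  have : Module (ZMod p) L := AddCommGroup.zmodModule hexp
  obtain ⟨B, hB⟩ := ZMod.exists_bilinForm_toQZ_eq p (nabla : L →+ L →+ QZ)
  replace hB : ∀ x y : L, ZMod.toQZ p (B x y) = nabla x y := hB
  have hBalt : B.IsAlt := fun x ↦ ZMod.toQZ_injective p (by rw [hB, hsymp, map_zero])
  have hBsep : B.SeparatingLeft := fun x hx ↦ nabla.injective <| by
    ext y
    rw [← hB, hx, map_zero, map_zero, AddMonoidHom.zero_apply]
  have hnabla {N : Submodule (ZMod p) L} (hN : N ≤ B.orthogonal N) :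
      ∀ a ∈ N, ∀ b ∈ N, nabla a b = 0 := fun a ha b hb ↦ by rw [← hB, hN hb a ha, map_zero]
  obtain ⟨A, M, hAM, hA, hM⟩ := LinearMap.BilinForm.exists_isCompl_isotropic hBalt hBsep
  exact ⟨↥A, inferInstance, inferInstance,
    standardPair_of_isCompl nabla hsymp hAM (hnabla hA) (hnabla hM)⟩
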